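/- In the extended rock-throwing model M with epistemic state ({(M,u₁), (M,u₂), (M,u₃), (M,u₄)}, Pr) where Pr assigns probability 1/4 to each situation, and where u₁ has b₀ = 1 and BT = 1 (the bottle is already shattered), u₂ has b₀ = 0 and BT = 2 (Billy throws extra hard, so both rocks hit simultaneously), u₃ has b₀ = 0 and BT = 1 (Suzy's rock hits first), and u₄ has b₀ = 0 and BT = 0 (Billy does not throw): the degrees of responsibility of ST = 1 for BS = 1 in (M_{ST←1}, u₁), (M_{ST←1}, u₂), (M_{ST←1}, u₃), (M_{ST←1}, u₄) are 0, 1/2, 1, and 1 respectively, and hence the degree of blame of setting ST to 1 for BS = 1 relative to this epistemic state is 5/8. -/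

import Mathlib

open Classical

/-- A causal model over exogenous variables `U` and endogenous variables `V`,
with integer-valued variables.  `Rexo Y` / `R X` are the (intended) ranges of
the variables, and `F X` is the structural equation for the endogenous
variable `X`, giving its value as a function of the values of all other
variables. -/
structure CausalModel (U V : Type) where
  Rexo : U → Set ℤ
  R : V → Set ℤ
  F : V → (U → ℤ) → (V → ℤ) → ℤ

namespace CausalModel

variable {U V : Type}

/-- A causal model is recursive if the variables can be ordered so that each
structural equation depends only on the values of strictly earlier endogenous
variables (equivalently, the dependency graph is acyclic). -/
def Recursive (M : CausalModel U V) : Prop :=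
  ∃ ord : V → ℕ, ∀ (X : V) (u : U → ℤ) (g g' : V → ℤ),
    (∀ Y, ord Y < ord X → g Y = g' Y) → M.F X u g = M.F X u g'

/-- `s` simultaneously satisfies all the structural equations in context `u`. -/
def IsSolution (M : CausalModel U V) (u : U → ℤ) (s : V → ℤ) : Prop :=
  ∀ X, s X = M.F X u s

/-- The (unique, for recursive models) solution of the equations in context `u`. -/
noncomputable def solution (M : CausalModel U V) (u : U → ℤ) : V → ℤ :=
  Classical.epsilon fun s => M.IsSolution u s

/-- The model `M_{A ← y}` obtained by replacing the equations of the variables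
in `A` by the constant values given by `y`. -/
noncomputable def intervene (M : CausalModel U V) (A : Set V) (y : V → ℤ) :
    CausalModel U V where
  Rexo := M.Rexo
  R := M.R
  F := fun X u g => if X ∈ A then y X else M.F X u g

end CausalModel

/-- Boolean combinations of primitive events `X = x`. -/
inductive CausalFormula (V : Type) where
  | tru : CausalFormula V
  | eq : V → ℤ → CausalFormula V
  | not : CausalFormula V → CausalFormula V
  | and : CausalFormula V → CausalFormula V → CausalFormula V
  | or : CausalFormula V → CausalFormula V → CausalFormula V
  | iff : CausalFormula V → CausalFormula V → CausalFormula V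

/-- Truth of a causal formula under an assignment to the endogenous variables. -/
def CausalFormula.holds {V : Type} (s : V → ℤ) : CausalFormula V → Prop
  | tru => True
  | eq X x => s X = x
  | not φ => ¬ φ.holds s
  | and φ χ => φ.holds s ∧ χ.holds s
  | or φ χ => φ.holds s ∨ χ.holds s
  | iff φ χ => φ.holds s ↔ χ.holds s

/-- `(M,u) ⊨ [A ← y] φ` : `φ` holds in the unique solution of `M_{A ← y}` in
context `u`. -/
def sat {U V : Type} (M : CausalModel U V) (u : U → ℤ) (A : Set V) (y : V → ℤ)
    (φ : CausalFormula V) : Prop :=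
  φ.holds ((M.intervene A y).solution u)

/-- Condition AC2 of the Halpern–Pearl definition of causality, for the single
conjunct `X = x`, witnessed by the partition `(Wᶜ, W)` (so `Z = Wᶜ ∋ X`) and
the setting `(x', w')` of `(X, W)`. -/
def AC2 {U V : Type} (M : CausalModel U V) (u : U → ℤ) (X : V) (x : ℤ)
    (φ : CausalFormula V) (W : Set V) (x' : ℤ) (w' : V → ℤ) : Prop :=
  X ∉ W ∧ x' ∈ M.R X ∧ (∀ Y ∈ W, w' Y ∈ M.R Y) ∧
  -- AC2(a): (M,u) ⊨ [X ← x', W ← w'] ¬φ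
  ¬ sat M u (insert X W) (fun Y => if Y = X then x' else w' Y) φ ∧
  -- AC2(b): (M,u) ⊨ [X ← x, W ← w', Z' ← z*] φ for all subsets Z' of Z = Wᶜ
  ∀ Z' : Set V, Z' ⊆ Wᶜ →
    sat M u (insert X (W ∪ Z'))
      (fun Y => if Y = X then x else if Y ∈ W then w' Y else M.solution u Y) φ

/-- `X = x` is a cause of `φ` in `(M,u)`: AC1 together with AC2 (AC3 is
automatic for single conjuncts). -/
def IsCause {U V : Type} (M : CausalModel U V) (u : U → ℤ) (X : V) (x : ℤ)
    (φ : CausalFormula V) : Prop :=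
  (M.solution u X = x ∧ φ.holds (M.solution u)) ∧
  ∃ W x' w', AC2 M u X x φ W x' w'

/-- The degree of responsibility of `X = x` for `φ` in `(M,u)` : `0` if
`X = x` is not a cause of `φ`, and otherwise `1/(k+1)` where `k` is the
minimal, over all AC2 witnesses, number of variables of `W` whose value in
`w'` differs from their value in the unique solution of `(M,u)`. -/
noncomputable def dr {U V : Type} (M : CausalModel U V) (u : U → ℤ) (X : V)
    (x : ℤ) (φ : CausalFormula V) : ℚ :=
  if IsCause M u X x φ then
    1 / ((sInf {k : ℕ | ∃ W x' w', AC2 M u X x φ W x' w' ∧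
        {Y | Y ∈ W ∧ w' Y ≠ M.solution u Y}.ncard = k} : ℕ) + 1 : ℚ)
  else 0

/-- The degree of blame of setting `X` to `x` for `φ`, relative to the
epistemic state given by the (indexed) finite set of situations
`(Mod i, ctx i)` with probabilities `Pr i` : the expected degree of
responsibility of `X = x` for `φ` in the situations `((Mod i)_{X ← x}, ctx i)`. -/
noncomputable def db {U V ι : Type} [Fintype ι] (Mod : ι → CausalModel U V)
    (ctx : ι → U → ℤ) (Pr : ι → ℚ) (X : V) (x : ℤ) (φ : CausalFormula V) : ℚ :=
  ∑ i, dr ((Mod i).intervene {X} (fun _ => x)) (ctx i) X x φ * Pr i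

/-- Variables of the extended rock-throwing model. -/
inductive ERockVar : Type where
  | ST : ERockVar
  | BT : ERockVar
  | SH : ERockVar
  | BH : ERockVar
  | BS : ERockVar
deriving DecidableEq

/-- The extended rock-throwing model.  The exogenous context determines
`b₀ = u 0 ∈ {0,1}` (whether the bottle is already shattered), Billy's throw
`u 1 ∈ {0,1,2}` and Suzy's throw `u 2 ∈ {0,1}` (equal to `0` in all four
contexts).  `ST` and `BT` copy the exogenous values, `SH = ST`, `BH = 1` iff
`BT = 2` or (`BT = 1` and `SH = 0`), and `BS = 1` iff `b₀ = 1` or `SH = 1` or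
`BH = 1`. -/
def extRock : CausalModel (Fin 3) ERockVar where
  Rexo := ![({0, 1} : Set ℤ), {0, 1, 2}, {0, 1}]
  R := fun X =>
    match X with
    | .BT => {0, 1, 2}
    | _ => {0, 1}
  F := fun X u g =>
    match X with
    | .ST => u 2
    | .BT => u 1
    | .SH => g .ST
    | .BH => if g .BT = 2 ∨ (g .BT = 1 ∧ g .SH = 0) then 1 else 0
    | .BS => if u 0 = 1 ∨ g .SH = 1 ∨ g .BH = 1 then 1 else 0

/-!
Fixing `ST = 1` makes `SH = 1` and hence `BS = 1` in every context. If the bottle was already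
shattered (`b₀ = 1`), AC2(b) with `Z' = ∅` forces `BS` to stay `1` under the contingency too, so
AC2(a) fails and `ST = 1` is not a cause. Otherwise the contingency `BH ← 0` together with
`ST ← 0` leaves the bottle intact; `BH = 0` is the actual value unless Billy throws hard
(`BT = 2`), so the responsibility is `1` for `BT ∈ {0, 1}`. For `BT = 2` Billy's rock hits
whatever the actual values of the other variables are, so every contingency changes some
variable, and the responsibility is `1/2`. The blame is `(0 + 1/2 + 1 + 1) / 4 = 5/8`.
-/

namespace CausalModel

variable {U V : Type}

lemma intervene_intervene (M : CausalModel U V) (A B : Set V) (y z : V → ℤ) :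
    (M.intervene A y).intervene B z
      = M.intervene (A ∪ B) (fun X => if X ∈ B then z X else y X) := by
  simp only [intervene, mk.injEq, true_and]
  funext X u g
  by_cases hB : X ∈ B <;> by_cases hA : X ∈ A <;> simp [hA, hB]

lemma Recursive.intervene {M : CausalModel U V} (hM : M.Recursive) (A : Set V) (y : V → ℤ) :
    (M.intervene A y).Recursive := by
  obtain ⟨ord, hord⟩ := hM
  refine ⟨ord, fun X u g g' h => ?_⟩
  simp only [CausalModel.intervene, hord X u g g' h]

lemma Recursive.eq_of_isSolution {M : CausalModel U V} (hM : M.Recursive) {u : U → ℤ}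
    {s t : V → ℤ} (hs : M.IsSolution u s) (ht : M.IsSolution u t) : s = t := by
  obtain ⟨ord, hord⟩ := hM
  funext X
  induction h : ord X using Nat.strong_induction_on generalizing X with
  | _ n ih =>
    rw [hs X, ht X]
    exact hord X u s t fun Y hY => ih _ (h ▸ hY) Y rfl

lemma Recursive.solution_eq {M : CausalModel U V} (hM : M.Recursive) {u : U → ℤ}
    {s : V → ℤ} (hs : M.IsSolution u s) : M.solution u = s :=
  hM.eq_of_isSolution (Classical.epsilon_spec ⟨s, hs⟩) hs

end CausalModel

section Responsibility

variable {U V : Type} (M : CausalModel U V) (u : U → ℤ) (X : V) (x : ℤ) (φ : CausalFormula V)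

def ac2Costs : Set ℕ :=
  {k | ∃ W x' w', AC2 M u X x φ W x' w' ∧ {Y | Y ∈ W ∧ w' Y ≠ M.solution u Y}.ncard = k}

variable {M u X x φ}

lemma dr_eq_of_not_isCause (h : ¬ IsCause M u X x φ) : dr M u X x φ = 0 :=
  if_neg h

lemma dr_eq_of_isLeast (hAC1 : M.solution u X = x ∧ φ.holds (M.solution u)) {k : ℕ}
    (hk : IsLeast (ac2Costs M u X x φ) k) : dr M u X x φ = 1 / (k + 1) := by
  obtain ⟨W, x', w', hW, -⟩ := hk.1
  rw [dr, if_pos ⟨hAC1, W, x', w', hW⟩]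
  exact congrArg (fun n : ℕ => 1 / ((n : ℚ) + 1)) hk.csInf_eq

end Responsibility

namespace ERockVar

open CausalModel

instance : Fintype ERockVar :=
  ⟨⟨{ST, BT, SH, BH, BS}, by decide⟩, fun X => by cases X <;> decide⟩

lemma extRock_recursive : extRock.Recursive := by
  refine ⟨fun | ST => 0 | BT => 0 | SH => 1 | BH => 2 | BS => 3, fun X u g g' h => ?_⟩
  cases X <;> simp [extRock, h]

noncomputable def extRockSolution (A : Set ERockVar) (y : ERockVar → ℤ) (u : Fin 3 → ℤ) :
    ERockVar → ℤ :=
  let val (X : ERockVar) (v : ℤ) := if X ∈ A then y X else v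
  let st := val ST (u 2)
  let bt := val BT (u 1)
  let sh := val SH st
  let bh := val BH (if bt = 2 ∨ (bt = 1 ∧ sh = 0) then 1 else 0)
  let bs := val BS (if u 0 = 1 ∨ sh = 1 ∨ bh = 1 then 1 else 0)
  fun | ST => st | BT => bt | SH => sh | BH => bh | BS => bs

lemma extRock_solution_intervene (A : Set ERockVar) (y : ERockVar → ℤ) (u : Fin 3 → ℤ) :
    (extRock.intervene A y).solution u = extRockSolution A y u :=
  (extRock_recursive.intervene A y).solution_eq fun X => by cases X <;> rfl

lemma sat_extRock_intervene_iff (A₁ A : Set ERockVar) (y₁ y : ERockVar → ℤ) (u : Fin 3 → ℤ)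
    (φ : CausalFormula ERockVar) :
    sat (extRock.intervene A₁ y₁) u A y φ ↔
      φ.holds (extRockSolution (A₁ ∪ A) (fun X => if X ∈ A then y X else y₁ X) u) := by
  rw [sat, intervene_intervene, extRock_solution_intervene]

noncomputable abbrev suzyThrows : CausalModel (Fin 3) ERockVar :=
  extRock.intervene {ST} fun _ => 1

abbrev bottleShatters : CausalFormula ERockVar :=
  .eq BS 1

lemma suzyThrows_solution (u : Fin 3 → ℤ) :
    suzyThrows.solution u =
      fun | ST => 1 | BT => u 1 | SH => 1 | BH => if u 1 = 2 then 1 else 0 | BS => 1 := by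
  rw [extRock_solution_intervene]
  funext X
  cases X <;> simp [extRockSolution]

lemma suzyThrows_ac1 (u : Fin 3 → ℤ) :
    suzyThrows.solution u ST = 1 ∧ bottleShatters.holds (suzyThrows.solution u) := by
  simp [suzyThrows_solution, CausalFormula.holds]

lemma ac2_blockBillyHit {u : Fin 3 → ℤ} (hu : u 0 = 0) :
    AC2 suzyThrows u ST 1 bottleShatters {BH} 0 fun _ => 0 := by
  refine ⟨by simp, by simp [intervene, extRock], fun Y hY => by simp_all [intervene, extRock],
    ?_, fun Z' _ => ?_⟩
  · simp [sat_extRock_intervene_iff, extRockSolution, CausalFormula.holds, hu]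
  · rw [sat_extRock_intervene_iff, suzyThrows_solution]
    by_cases hBS : BS ∈ Z' <;> by_cases hSH : SH ∈ Z' <;>
      simp [extRockSolution, CausalFormula.holds, hBS, hSH]

lemma not_isCause_of_shattered {u : Fin 3 → ℤ} (hu : u 0 = 1) :
    ¬ IsCause suzyThrows u ST 1 bottleShatters := by
  rintro ⟨-, W, x', w', -, -, -, hnot, hcontg⟩
  have hkept := hcontg ∅ (Set.empty_subset _)
  rw [sat_extRock_intervene_iff] at hkept
  apply hnot
  rw [sat_extRock_intervene_iff]
  by_cases hBS : BS ∈ W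
  · simp_all [extRockSolution, CausalFormula.holds]
  · simp [extRockSolution, CausalFormula.holds, hBS, hu]

lemma ac2_changes_some_of_billyHard {u : Fin 3 → ℤ} (hu : u 1 = 2) {W : Set ERockVar} {x' : ℤ}
    {w' : ERockVar → ℤ} (h : AC2 suzyThrows u ST 1 bottleShatters W x' w') :
    {Y | Y ∈ W ∧ w' Y ≠ suzyThrows.solution u Y}.Nonempty := by
  obtain ⟨-, -, -, hnot, -⟩ := h
  by_contra! hkept
  have hval (Y : ERockVar) (hY : Y ∈ W) : w' Y = suzyThrows.solution u Y := by
    by_contra hne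
    exact hkept.subset ⟨hY, hne⟩
  simp only [suzyThrows_solution, hu] at hval
  apply hnot
  rw [sat_extRock_intervene_iff]
  by_cases hBS : BS ∈ W
  · simp [extRockSolution, CausalFormula.holds, hBS, hval BS hBS]
  by_cases hBH : BH ∈ W
  · simp [extRockSolution, CausalFormula.holds, hBS, hBH, hval BH hBH]
  by_cases hBT : BT ∈ W <;> simp [extRockSolution, CausalFormula.holds, hBS, hBH, hBT, hu, hval]

lemma ac2Costs_isLeast_zero {u : Fin 3 → ℤ} (hu₀ : u 0 = 0) (hu₁ : u 1 ≠ 2) :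
    IsLeast (ac2Costs suzyThrows u ST 1 bottleShatters) 0 := by
  refine ⟨⟨{BH}, 0, fun _ => 0, ac2_blockBillyHit hu₀, ?_⟩, fun k _ => k.zero_le⟩
  rw [Set.ncard_eq_zero]
  ext Y
  cases Y <;> simp [suzyThrows_solution, hu₁]

lemma ac2Costs_isLeast_one {u : Fin 3 → ℤ} (hu₀ : u 0 = 0) (hu₁ : u 1 = 2) :
    IsLeast (ac2Costs suzyThrows u ST 1 bottleShatters) 1 := by
  refine ⟨⟨{BH}, 0, fun _ => 0, ac2_blockBillyHit hu₀, ?_⟩, ?_⟩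
  · rw [Set.ncard_eq_one]
    exact ⟨BH, Set.ext fun Y => by cases Y <;> simp [suzyThrows_solution, hu₁]⟩
  · rintro k ⟨W, x', w', h, rfl⟩
    exact (ac2_changes_some_of_billyHard hu₁ h).ncard_pos

end ERockVar

open ERockVar in
/-- In the extended rock-throwing model, relative to the epistemic state
giving probability `1/4` to each of the contexts `u₁ = (b₀=1, BT=1)`,
`u₂ = (b₀=0, BT=2)`, `u₃ = (b₀=0, BT=1)`, `u₄ = (b₀=0, BT=0)`: the degrees of
responsibility of `ST = 1` for `BS = 1` in `(M_{ST←1}, uᵢ)` are `0`, `1/2`,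
`1`, `1`, and the degree of blame of setting `ST` to `1` for `BS = 1` is
`5/8`. -/
theorem extRock_blame :
    dr (extRock.intervene {ERockVar.ST} fun _ => 1) ![1, 1, 0]
        ERockVar.ST 1 (CausalFormula.eq ERockVar.BS 1) = 0 ∧
    dr (extRock.intervene {ERockVar.ST} fun _ => 1) ![0, 2, 0]
        ERockVar.ST 1 (CausalFormula.eq ERockVar.BS 1) = 1 / 2 ∧
    dr (extRock.intervene {ERockVar.ST} fun _ => 1) ![0, 1, 0]
        ERockVar.ST 1 (CausalFormula.eq ERockVar.BS 1) = 1 ∧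
    dr (extRock.intervene {ERockVar.ST} fun _ => 1) ![0, 0, 0]
        ERockVar.ST 1 (CausalFormula.eq ERockVar.BS 1) = 1 ∧
    db (fun _ : Fin 4 => extRock) ![![1, 1, 0], ![0, 2, 0], ![0, 1, 0], ![0, 0, 0]]
        (fun _ => 1 / 4) ERockVar.ST 1 (CausalFormula.eq ERockVar.BS 1)
      = 5 / 8 := by
  have h₁ : dr suzyThrows ![1, 1, 0] ST 1 bottleShatters = 0 :=
    dr_eq_of_not_isCause (not_isCause_of_shattered rfl)
  have h₂ : dr suzyThrows ![0, 2, 0] ST 1 bottleShatters = 1 / 2 := by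
    rw [dr_eq_of_isLeast (suzyThrows_ac1 _) (ac2Costs_isLeast_one rfl rfl)]
    norm_num
  have h₃ : dr suzyThrows ![0, 1, 0] ST 1 bottleShatters = 1 := by
    rw [dr_eq_of_isLeast (suzyThrows_ac1 _) (ac2Costs_isLeast_zero rfl (by decide))]
    norm_num
  have h₄ : dr suzyThrows ![0, 0, 0] ST 1 bottleShatters = 1 := by
    rw [dr_eq_of_isLeast (suzyThrows_ac1 _) (ac2Costs_isLeast_zero rfl (by decide))]
    norm_num
  refine ⟨h₁, h₂, h₃, h₄, ?_⟩
  rw [db, Fin.sum_univ_four]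
  simp only [Matrix.cons_val_zero, Matrix.cons_val_one, Matrix.cons_val_two,
    Matrix.cons_val_three, Matrix.head_cons, Matrix.tail_cons]
  rw [h₁, h₂, h₃, h₄]
  norm_num
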